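/- arXiv:1807.08085 — 6 statements merged into one kernel-verified Lean document; each statement's English description precedes it below -/
import Mathlib

section
/- Let G be a directed bipartite graph with left vertex set [k] and right vertex set [m] such that an edge i←j exists only if i→j exists. Define vertex types inductively: a right vertex j is of type (K,1) if |∂_out(j)| ≤ K, and for ℓ ≥ 2, a right vertex j not of any type (K,1),…,(K,ℓ−1) is of type (K,ℓ) if |∂_out(j) \ ∂_in(T_{K,1}(G) ∪ ⋯ ∪ T_{K,ℓ−1}(G))| ≤ K. Then for any subset I ⊂ [m], the subgraph G^(I) obtained by removing the right vertices in I satisfies T_{K,ℓ}(G^(I)) ⊂ ⋃_{h ≤ ℓ} T_{K,h}(G) for every K > 0 and ℓ ≥ 1. -/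
/-- hereditary property of vertex types under removal of right vertices.
A directed bipartite graph on `Fin k ⊔ Fin m` is encoded by relations `toE i j` (the edge
`i → j`) and `fromE i j` (the edge `i ← j`), with `fromE ⊆ toE`.  For a right vertex `j`,
`∂_out(j) = {i | fromE i j}`; for a set `S` of right vertices, `∂_in(S) = {i | ∃ j ∈ S, toE i j}`.
The type families `T` (for `G`) and `T'` (for the subgraph `G^(I)` obtained by deleting
the right vertices in `I`; deleting right vertices does not change edges among the
remaining vertices) are characterized by their defining recursion.  The conclusion is
`T_{K,ℓ}(G^(I)) ⊆ ⋃_{1 ≤ h ≤ ℓ} T_{K,h}(G)` for every `K > 0` and `ℓ ≥ 1`. -/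
theorem stmt0 (k m : ℕ) (toE fromE : Fin k → Fin m → Prop)
    (hsub : ∀ i j, fromE i j → toE i j)
    (K : ℝ) (hK : 0 < K) (I : Set (Fin m))
    (T T' : ℕ → Set (Fin m))
    (hT : ∀ ℓ, 1 ≤ ℓ → T ℓ = {j | (∀ h ∈ Set.Ico 1 ℓ, j ∉ T h) ∧
      ((Set.ncard ({i | fromE i j} \
        {i | ∃ j' ∈ ⋃ h ∈ Set.Ico 1 ℓ, T h, toE i j'}) : ℝ) ≤ K)})
    (hT' : ∀ ℓ, 1 ≤ ℓ → T' ℓ = {j | j ∉ I ∧ (∀ h ∈ Set.Ico 1 ℓ, j ∉ T' h) ∧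
      ((Set.ncard ({i | fromE i j} \
        {i | ∃ j' ∈ ⋃ h ∈ Set.Ico 1 ℓ, T' h, toE i j'}) : ℝ) ≤ K)})
    (ℓ : ℕ) (hℓ : 1 ≤ ℓ) :
    T' ℓ ⊆ ⋃ h ∈ Set.Icc 1 ℓ, T h := by

  have main : ∀ n, 1 ≤ n → T' n ⊆ ⋃ h ∈ Set.Icc 1 n, T h := by
    intro n
    induction n using Nat.strong_induction_on with
    | _ n ih =>
      intro hn j hj
      rw [hT' n hn] at hj
      obtain ⟨hjI, hnot, hcard⟩ := hj
      by_cases hc : ∃ h ∈ Set.Ico 1 n, j ∈ T h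
      · obtain ⟨h, hh, hjh⟩ := hc
        exact Set.mem_biUnion ⟨hh.1, hh.2.le⟩ hjh
      · push_neg at hc
        have hsubU : (⋃ h ∈ Set.Ico 1 n, T' h) ⊆ ⋃ h ∈ Set.Ico 1 n, T h := by
          intro x hx
          simp only [Set.mem_iUnion] at hx ⊢
          obtain ⟨h, hh, hxh⟩ := hx
          have := ih h hh.2 hh.1 hxh
          simp only [Set.mem_iUnion] at this
          obtain ⟨h', hh', hxh'⟩ := this
          exact ⟨h', ⟨hh'.1, lt_of_le_of_lt hh'.2 hh.2⟩, hxh'⟩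
        have key : ({i | fromE i j} \
            {i | ∃ j' ∈ ⋃ h ∈ Set.Ico 1 n, T h, toE i j'}) ⊆
            ({i | fromE i j} \
            {i | ∃ j' ∈ ⋃ h ∈ Set.Ico 1 n, T' h, toE i j'}) := by
          rintro i ⟨hi1, hi2⟩
          refine ⟨hi1, fun hx => hi2 ?_⟩
          obtain ⟨j', hj', ht⟩ := hx
          exact ⟨j', hsubU hj', ht⟩
        have hcard2 := Set.ncard_le_ncard key (Set.toFinite _)
        have hjT : j ∈ T n := by
          rw [hT n hn]
          exact ⟨hc, le_trans (Nat.cast_le.mpr hcard2) hcard⟩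
        exact Set.mem_biUnion ⟨hn, le_refl n⟩ hjT
  exact main ℓ hℓ
end

section
/- Let G be a directed bipartite graph with left vertices [k] and right vertices [m] such that i←j only if i→j, let I ⊂ [m], and let K > 0. Assume that for all right vertices j ∈ [m]\I, |∂_out(j) ∩ ∂_in(I)| ≤ K/2. Then T_{K,∞}(G^(I)) ⊂ T_{K/2,∞}(G), where T_{K,∞} denotes the set of right vertices not of any finite type (K,ℓ). -/
/-- if every surviving right vertex has small out-neighborhood intersection
with the in-neighborhood of the deleted set `I`, then the infinite type of the subgraph
`G^(I)` (at parameter `K`) is contained in the infinite type of `G` at parameter `K/2`.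
Encoding as in STATEMENT 0: `TG` is the type family of `G` at parameter `K/2`, `TS` is the
type family of the subgraph `G^(I)` at parameter `K`.  A vertex is of type `(·,∞)` iff it
belongs to no finite type. -/
theorem stmt1 (k m : ℕ) (toE fromE : Fin k → Fin m → Prop)
    (hsub : ∀ i j, fromE i j → toE i j)
    (K : ℝ) (hK : 0 < K) (I : Set (Fin m))
    (hI : ∀ j ∉ I, ((Set.ncard ({i | fromE i j} ∩ {i | ∃ j' ∈ I, toE i j'}) : ℝ) ≤ K / 2))
    (TG TS : ℕ → Set (Fin m))
    (hTG : ∀ ℓ, 1 ≤ ℓ → TG ℓ = {j | (∀ h ∈ Set.Ico 1 ℓ, j ∉ TG h) ∧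
      ((Set.ncard ({i | fromE i j} \
        {i | ∃ j' ∈ ⋃ h ∈ Set.Ico 1 ℓ, TG h, toE i j'}) : ℝ) ≤ K / 2)})
    (hTS : ∀ ℓ, 1 ≤ ℓ → TS ℓ = {j | j ∉ I ∧ (∀ h ∈ Set.Ico 1 ℓ, j ∉ TS h) ∧
      ((Set.ncard ({i | fromE i j} \
        {i | ∃ j' ∈ ⋃ h ∈ Set.Ico 1 ℓ, TS h, toE i j'}) : ℝ) ≤ K)}) :
    {j | j ∉ I ∧ ∀ ℓ, 1 ≤ ℓ → j ∉ TS ℓ} ⊆ {j | ∀ ℓ, 1 ≤ ℓ → j ∉ TG ℓ} := by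
  classical
  have H : ∀ ℓ, 1 ≤ ℓ → ∀ j, j ∈ TG ℓ → j ∉ I → ∃ ℓ', 1 ≤ ℓ' ∧ j ∈ TS ℓ' := by
    intro ℓ
    induction ℓ using Nat.strong_induction_on with
    | _ ℓ IH =>
    intro hℓ j hjTG hjI
    set g : Fin m → ℕ := fun j' => if hh : ∃ ℓ', 1 ≤ ℓ' ∧ j' ∈ TS ℓ' then hh.choose else 1
      with hg
    set L : ℕ := Finset.univ.sup g + 1 with hL
    have hgL : ∀ j', g j' < L := fun j' =>
      Nat.lt_succ_of_le (Finset.le_sup (Finset.mem_univ j'))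
    have hg1 : ∀ j', 1 ≤ g j' := by
      intro j'
      by_cases hh : ∃ ℓ', 1 ≤ ℓ' ∧ j' ∈ TS ℓ'
      · simp only [hg, dif_pos hh]; exact hh.choose_spec.1
      · simp [hg, dif_neg hh]
    have hgTS : ∀ j', (∃ ℓ', 1 ≤ ℓ' ∧ j' ∈ TS ℓ') → j' ∈ TS (g j') := by
      intro j' hh
      simp only [hg, dif_pos hh]; exact hh.choose_spec.2
    rw [hTG ℓ hℓ] at hjTG
    obtain ⟨-, hcard⟩ := hjTG
    have hsubset : ({i | fromE i j} \ {i | ∃ j' ∈ ⋃ h ∈ Set.Ico 1 L, TS h, toE i j'})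
        ⊆ ({i | fromE i j} \ {i | ∃ j' ∈ ⋃ h ∈ Set.Ico 1 ℓ, TG h, toE i j'})
          ∪ ({i | fromE i j} ∩ {i | ∃ j' ∈ I, toE i j'}) := by
      rintro i ⟨hf, hnTS⟩
      by_cases hCI : ∃ j' ∈ I, toE i j'
      · exact Or.inr ⟨hf, hCI⟩
      · refine Or.inl ⟨hf, ?_⟩
        rintro ⟨j', hj'mem, htoE⟩
        simp only [Set.mem_iUnion] at hj'mem
        obtain ⟨h, hh, hj'⟩ := hj'mem
        have hj'I : j' ∉ I := fun hx => hCI ⟨j', hx, htoE⟩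
        have hex := IH h hh.2 hh.1 j' hj' hj'I
        refine hnTS ⟨j', ?_, htoE⟩
        simp only [Set.mem_iUnion]
        exact ⟨g j', ⟨hg1 j', hgL j'⟩, hgTS j' hex⟩
    have hcardL : (Set.ncard ({i | fromE i j} \
        {i | ∃ j' ∈ ⋃ h ∈ Set.Ico 1 L, TS h, toE i j'}) : ℝ) ≤ K := by
      have h1 := Set.ncard_le_ncard hsubset (Set.toFinite _)
      have h2 := Set.ncard_union_le
        ({i | fromE i j} \ {i | ∃ j' ∈ ⋃ h ∈ Set.Ico 1 ℓ, TG h, toE i j'})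
        ({i | fromE i j} ∩ {i | ∃ j' ∈ I, toE i j'})
      have h3 := hI j hjI
      have h4 : (Set.ncard ({i | fromE i j} \
          {i | ∃ j' ∈ ⋃ h ∈ Set.Ico 1 L, TS h, toE i j'}) : ℝ) ≤
          (Set.ncard ({i | fromE i j} \ {i | ∃ j' ∈ ⋃ h ∈ Set.Ico 1 ℓ, TG h, toE i j'}) : ℝ)
          + (Set.ncard ({i | fromE i j} ∩ {i | ∃ j' ∈ I, toE i j'}) : ℝ) := by
        exact_mod_cast (h1.trans h2)
      linarith
    by_cases hmem : ∃ h, 1 ≤ h ∧ h < L ∧ j ∈ TS h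
    · obtain ⟨h, h1, _, h3⟩ := hmem; exact ⟨h, h1, h3⟩
    · refine ⟨L, by omega, ?_⟩
      rw [hTS L (by omega)]
      exact ⟨hjI, fun h hh hx => hmem ⟨h, hh.1, hh.2, hx⟩, hcardL⟩
  rintro j ⟨hjI, hjTS⟩ ℓ hℓ hjTG
  obtain ⟨ℓ', h1, h2⟩ := H ℓ hℓ j hjTG hjI
  exact hjTS ℓ' h1 h2
end

section
/- Let K, u > 0, let G be a directed bipartite graph on [n]⊔[n] with i←j only if i→j, let m ≤ n, and let φ: [n]→[m] be a u-light (G,K)-admissible mapping, meaning additionally that for each right vertex j, the number of left vertices i ∈ ∂_in(j) with |φ^{-1}(φ(i))| = 2 is at most u. Suppose that for some δ, ε > 0, |∂_in(I)| ≥ Σ_{i∈I} |∂_in(i)| − εK|I| for every set I of right vertices with |I| ≤ δn. Then in the compressed graph φ(G), |∂_in^φ(I)| ≥ Σ_{i∈I} |∂_in^φ(i)| − (εK + u)|I| for every set I of right vertices with |I| ≤ δn. -/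
/-!
Gluing changes the in-neighbourhood `S = ∂_in(I)` only at glued vertices: `φ` is injective on
the unglued part of `S`, so `|S| ≤ |φ(S)| + |S ∩ glued|`, and by `u`-lightness each `j ∈ I`
contributes at most `u` glued in-neighbours. Since images never grow, `|∂_in^φ(j)| ≤ |∂_in(j)|`,
and the expansion of `G` transfers to `φ(G)` at the cost of `u|I|`.
-/

open Set

theorem Set.ncard_biUnion_le {α β : Type*} (I : Finset α) (A : α → Set β) :
    (⋃ j ∈ I, A j).ncard ≤ ∑ j ∈ I, (A j).ncard := by
  classical
  induction I using Finset.induction_on with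
  | empty => simp
  | insert a s ha ih =>
    rw [Finset.sum_insert ha, Finset.set_biUnion_insert]
    exact (ncard_union_le _ _).trans (Nat.add_le_add_left ih _)

theorem Set.ncard_biUnion_le_card_mul {α β : Type*} {I : Finset α} {A : α → Set β} {u : ℝ}
    (h : ∀ j ∈ I, ((A j).ncard : ℝ) ≤ u) :
    ((⋃ j ∈ I, A j).ncard : ℝ) ≤ I.card * u :=
  calc ((⋃ j ∈ I, A j).ncard : ℝ) ≤ ∑ j ∈ I, ((A j).ncard : ℝ) := mod_cast ncard_biUnion_le I A
    _ ≤ I.card • u := Finset.sum_le_card_nsmul _ _ _ h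
    _ = I.card * u := nsmul_eq_mul _ _

theorem Set.injOn_setOf_ncard_fiber_le_one {α β : Type*} [Finite α] (f : α → β) :
    InjOn f {a | (f ⁻¹' {f a}).ncard ≤ 1} :=
  fun _ ha _ _ hab => ((ncard_le_one_iff (toFinite _)).1 ha) rfl hab.symm

theorem Set.ncard_le_ncard_image_add_ncard_inter {α β : Type*} [Finite α] {f : α → β}
    {S A : Set α} (h : InjOn f (S \ A)) :
    S.ncard ≤ (f '' S).ncard + (S ∩ A).ncard := by
  have hsplit := ncard_inter_add_ncard_sdiff_eq_ncard S A
  have himage : (S \ A).ncard ≤ (f '' S).ncard :=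
    h.ncard_image ▸ ncard_le_ncard (image_mono sdiff_subset)
  omega

theorem stmt3_general (n m : ℕ) (toE : Fin n → Fin n → Prop)
    (K u : ℝ) (φ : Fin n → Fin m)
    (hpre : ∀ i' : Fin m, (φ ⁻¹' {i'}).ncard ≤ 2)
    (hlight : ∀ j : Fin n,
      ((Set.ncard {i | toE i j ∧ (φ ⁻¹' {φ i}).ncard = 2} : ℝ) ≤ u))
    (δ ε : ℝ)
    (hexp : ∀ I : Finset (Fin n), (I.card : ℝ) ≤ δ * n →
      (∑ i ∈ I, (Set.ncard {i' | toE i' i} : ℝ)) - ε * K * I.card ≤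
        (Set.ncard {i' | ∃ j ∈ I, toE i' j} : ℝ)) :
    ∀ I : Finset (Fin n), (I.card : ℝ) ≤ δ * n →
      (∑ i ∈ I, (Set.ncard (φ '' {i' | toE i' i}) : ℝ)) - (ε * K + u) * I.card ≤
        (Set.ncard (φ '' {i' | ∃ j ∈ I, toE i' j}) : ℝ) := by
  intro I hI
  set glued : Set (Fin n) := {i | (φ ⁻¹' {φ i}).ncard = 2}
  set S : Set (Fin n) := {i' | ∃ j ∈ I, toE i' j}
  have hinj : InjOn φ (S \ glued) := (injOn_setOf_ncard_fiber_le_one φ).mono fun i hi => by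
    have := hpre (φ i)
    have : (φ ⁻¹' {φ i}).ncard ≠ 2 := hi.2
    show (φ ⁻¹' {φ i}).ncard ≤ 1
    omega
  have hS : (S.ncard : ℝ) ≤ (φ '' S).ncard + (S ∩ glued).ncard :=
    mod_cast ncard_le_ncard_image_add_ncard_inter hinj
  have hglued : ((S ∩ glued).ncard : ℝ) ≤ I.card * u := by
    have hcover : S ∩ glued ⊆ ⋃ j ∈ I, {i | toE i j ∧ (φ ⁻¹' {φ i}).ncard = 2} :=
      fun i ⟨⟨j, hj, hij⟩, hi⟩ => mem_biUnion hj ⟨hij, hi⟩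
    exact (Nat.cast_le.2 (ncard_le_ncard hcover)).trans
      (ncard_biUnion_le_card_mul fun j _ => hlight j)
  have himage : ∑ i ∈ I, ((φ '' {i' | toE i' i}).ncard : ℝ) ≤
      ∑ i ∈ I, ({i' | toE i' i}.ncard : ℝ) :=
    Finset.sum_le_sum fun _ _ => mod_cast ncard_image_le
  linarith [hexp I hI]

/-- a `u`-light `(G,K)`-admissible compression preserves the expansion
property of in-neighborhoods, with `εK` degraded to `εK + u`.  Encoding as in the other
statements: `G` lives on `[n] ⊔ [n]`; for a right vertex `j`, `∂_in(j) = {i | toE i j}`,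
and for a left vertex `i`, `∂_out(i) = {j | fromE i j}`.  In the compressed graph,
`∂_in^φ(S) = φ '' ∂_in(S)`.  `φ` is `(G,K)`-admissible (surjective, preimages of size at
most two, glued left vertices with disjoint out-neighborhoods contained in `T_{K,∞}(G)`,
where `T` is the type family of `G` at parameter `K`) and `u`-light: for each right
vertex `j`, at most `u` in-neighbors of `j` are glued by `φ`. -/
theorem stmt3 (n m : ℕ) (hm : m ≤ n) (toE fromE : Fin n → Fin n → Prop)
    (hsub : ∀ i j, fromE i j → toE i j)
    (K u : ℝ) (hK : 0 < K) (hu : 0 < u) (φ : Fin n → Fin m)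
    (T : ℕ → Set (Fin n))
    (hT : ∀ ℓ, 1 ≤ ℓ → T ℓ = {j | (∀ h ∈ Set.Ico 1 ℓ, j ∉ T h) ∧
      ((Set.ncard ({i | fromE i j} \
        {i | ∃ j' ∈ ⋃ h ∈ Set.Ico 1 ℓ, T h, toE i j'}) : ℝ) ≤ K)})
    (hsurj : Function.Surjective φ)
    (hpre : ∀ i' : Fin m, (φ ⁻¹' {i'}).ncard ≤ 2)
    (hglue : ∀ i₁ i₂ : Fin n, i₁ ≠ i₂ → φ i₁ = φ i₂ →
      ({j | fromE i₁ j} ∩ {j | fromE i₂ j} = ∅) ∧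
      ({j | fromE i₁ j} ∪ {j | fromE i₂ j} ⊆ {j | ∀ ℓ, 1 ≤ ℓ → j ∉ T ℓ}))
    (hlight : ∀ j : Fin n,
      ((Set.ncard {i | toE i j ∧ (φ ⁻¹' {φ i}).ncard = 2} : ℝ) ≤ u))
    (δ ε : ℝ) (hδ : 0 < δ) (hε : 0 < ε)
    (hexp : ∀ I : Finset (Fin n), (I.card : ℝ) ≤ δ * n →
      (∑ i ∈ I, (Set.ncard {i' | toE i' i} : ℝ)) - ε * K * I.card ≤
        (Set.ncard {i' | ∃ j ∈ I, toE i' j} : ℝ)) :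
    ∀ I : Finset (Fin n), (I.card : ℝ) ≤ δ * n →
      (∑ i ∈ I, (Set.ncard (φ '' {i' | toE i' i}) : ℝ)) - (ε * K + u) * I.card ≤
        (Set.ncard (φ '' {i' | ∃ j ∈ I, toE i' j}) : ℝ) :=
  stmt3_general n m toE K u φ hpre hlight δ ε hexp
end

section
/- Let k, m be positive integers, M ⊂ [k], K > 0; let G be a directed bipartite graph with left vertices [k] and right vertices [m] (with i←j only if i→j) satisfying: for some δ ∈ (0,1] and ε ∈ (0, 1/32), |∂_in(I)| ≥ Σ_{i∈I}|∂_in(i)| − εK|I| for any set of right vertices I with |I| ≤ δm. Fix a non-empty J ⊂ T_{K,∞}(G) with |J| ≤ δm/2 such that (2/K)Σ_{i∈M}|∂_out(i)| ≤ |J|/2. Then any M-shell 𝒜 = (𝒞_ℓ)_{ℓ=0}^d for G of depth d ≥ 1 centered in J satisfies |𝒞_ℓ| ≥ min(⌊δm/4⌋, (32ε)^{-ℓ}|J|) for all 0 ≤ ℓ ≤ d. -/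
/-!
Only right vertices of infinite type are tracked. Once the finitely many type sets have
stabilised, such a vertex `j` keeps more than `K` out-neighbours outside the set `N` of left
vertices adjacent to a finite type, and the shell property redirects every such out-neighbour
`i ∉ M` to another vertex `j' ≠ j` of the next layer, which is again of infinite type because
`i ∉ N`.

Take `B` of size `min (|𝒞 ℓ ∩ T_∞|, ⌊δm/4⌋)` in the current layer and let `S` be the set of
redirected left vertices. Each `i ∈ S` has two neighbours in `B ∪ (𝒞 (ℓ+1) ∩ T_∞)`, so the
expansion inequality, read as a bound on the total excess degree, gives
`|S| ≤ εK (|B| + |𝒞 (ℓ+1) ∩ T_∞|)`. Counting the out-edges of `B` and using expansion on `B`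
gives `|S| ≥ (1 - ε) K |B| - K |J| / 4`. Comparing the two bounds, the next layer is either
`(32ε)⁻¹` times larger or of size at least `⌊δm/4⌋`.
-/

open Finset

lemma sum_card_bipartiteBelow_le_sum_ncard {α β : Type*} [Finite β] (r : α → β → Prop)
    [DecidableRel r] (M : Finset α) (B : Finset β) :
    ∑ j ∈ B, #(M.bipartiteBelow r j) ≤ ∑ i ∈ M, {j | r i j}.ncard := by
  rw [← sum_card_bipartiteAbove_eq_sum_card_bipartiteBelow]
  refine sum_le_sum fun i _ => ?_
  rw [← Set.ncard_coe_finset]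
  exact Set.ncard_le_ncard fun j hj => (mem_bipartiteAbove r).1 hj |>.2

section Bipartite

variable {α β : Type*} [Fintype α]

lemma ncard_setOf_eq_card_filter (p : α → Prop) [DecidablePred p] :
    {x | p x}.ncard = #{x | p x} := by
  rw [Set.ncard_eq_toFinset_card', Set.toFinset_ofPred]

def ExpandsOn (r : α → β → Prop) (c : ℝ) (I : Finset β) : Prop :=
  ∑ j ∈ I, ({i | r i j}.ncard : ℝ) - c * #I ≤ {i | ∃ j ∈ I, r i j}.ncard

variable (r : α → β → Prop) [DecidableRel r]

lemma sum_card_bipartiteAbove_le {c : ℝ} {I : Finset β}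
    (hI : ExpandsOn r c I) (S : Finset α) :
    ∑ i ∈ S, (#(I.bipartiteAbove r i) : ℝ) ≤ #S + c * #I := by
  classical
  set f : α → ℕ := fun i => #(I.bipartiteAbove r i)
  have hdouble : ∑ j ∈ I, {i | r i j}.ncard = ∑ i, f i := by
    simp only [ncard_setOf_eq_card_filter, f, sum_card_bipartiteAbove_eq_sum_card_bipartiteBelow]
    rfl
  have hnbhd : {i | ∃ j ∈ I, r i j}.ncard = #{i | 0 < f i} := by
    simp only [ncard_setOf_eq_card_filter, f, card_pos, bipartiteAbove, filter_nonempty_iff]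
  -- Summed over all `i`: the excess `∑ (f i - 1)` over the vertices with `0 < f i` dominates
  -- `∑ i ∈ S, f i - #S`.
  have hpoint : ∀ i, (if i ∈ S then f i else 0) + (if 0 < f i then 1 else 0) ≤
      (if i ∈ S then 1 else 0) + f i := by
    intro i; split_ifs <;> omega
  have hsum : ∑ i ∈ S, f i + #{i | 0 < f i} ≤ #S + ∑ j ∈ I, {i | r i j}.ncard := by
    have := sum_le_sum fun i (_ : i ∈ univ) => hpoint i
    simpa only [sum_add_distrib, sum_ite_mem, univ_inter, sum_boole, Nat.cast_id, hdouble,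
      ← card_eq_sum_ones] using this
  rw [ExpandsOn, hnbhd] at hI
  have hsumℝ : ∑ i ∈ S, (f i : ℝ) + #{i | 0 < f i} ≤
      #S + ∑ j ∈ I, ({i | r i j}.ncard : ℝ) := by
    exact_mod_cast hsum
  linarith

lemma card_le_of_two_le_card_bipartiteAbove {c : ℝ} {I : Finset β} (hI : ExpandsOn r c I)
    {S : Finset α} (hS : ∀ i ∈ S, 2 ≤ #(I.bipartiteAbove r i)) :
    (#S : ℝ) ≤ c * #I := by
  have h2 : 2 * (#S : ℝ) ≤ ∑ i ∈ S, (#(I.bipartiteAbove r i) : ℝ) := by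
    rw [mul_comm, ← nsmul_eq_mul]
    exact card_nsmul_le_sum _ _ _ fun i hi => by exact_mod_cast hS i hi
  linarith [sum_card_bipartiteAbove_le r hI S]

end Bipartite

lemma exists_biUnion_Ico_eq_biUnion_Ici {β : Type*} [Finite β] (T : ℕ → Set β) :
    ∃ L, 1 ≤ L ∧ ⋃ h ∈ Set.Ico 1 L, T h = ⋃ h ∈ Set.Ici 1, T h := by
  let U : ℕ →o Set β :=
    ⟨fun ℓ => ⋃ h ∈ Set.Ico 1 ℓ, T h, fun a b hab => Set.biUnion_subset_biUnion_left
      fun h hh => ⟨hh.1, hh.2.trans_le hab⟩⟩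
  obtain ⟨n, hn⟩ := WellFoundedGT.monotone_chain_condition U
  refine ⟨n + 1, by omega, (Set.biUnion_subset_biUnion_left fun h hh => hh.1).antisymm ?_⟩
  simp only [Set.iUnion_subset_iff, Set.mem_Ici]
  intro h hh j hj
  have hmem : j ∈ U (n + h + 1) := Set.mem_biUnion (x := h) ⟨hh, by omega⟩ hj
  rw [← hn _ (by omega)] at hmem
  exact U.mono n.le_succ hmem

lemma lt_ncard_diff_of_forall_notMem {α β : Type*} [Finite β] {toE fromE : α → β → Prop} {K : ℝ}
    {T : ℕ → Set β}
    (hT : ∀ ℓ, 1 ≤ ℓ → T ℓ = {j | (∀ h ∈ Set.Ico 1 ℓ, j ∉ T h) ∧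
      ((Set.ncard ({i | fromE i j} \
        {i | ∃ j' ∈ ⋃ h ∈ Set.Ico 1 ℓ, T h, toE i j'}) : ℝ) ≤ K)})
    {j : β} (hj : ∀ ℓ, 1 ≤ ℓ → j ∉ T ℓ) :
    K < ({i | fromE i j} \ {i | ∃ j' ∈ ⋃ h ∈ Set.Ici 1, T h, toE i j'}).ncard := by
  obtain ⟨L, hL, hU⟩ := exists_biUnion_Ico_eq_biUnion_Ici T
  have hjL := hj L hL
  rw [hT L hL, hU] at hjL
  simp only [Set.mem_ofPred_eq, not_and, not_le] at hjL
  exact hjL fun h hh => hj h hh.1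

lemma natCast_le_three_mul_floor {D : ℝ} {J : ℕ} (hJ : (J : ℝ) ≤ D / 2) (hF : 1 ≤ ⌊D / 4⌋) :
    (J : ℝ) ≤ 3 * ⌊D / 4⌋ := by
  have hlt : (J : ℝ) < 2 * ⌊D / 4⌋ + 2 := by linarith [Int.lt_floor_add_one (D / 4)]
  have hJint : (J : ℤ) < 2 * ⌊D / 4⌋ + 2 := by exact_mod_cast hlt
  exact_mod_cast (by omega : (J : ℤ) ≤ 3 * ⌊D / 4⌋)

lemma min_le_of_sub_le_mul {ε F t J b a : ℝ} (hε : ε ∈ Set.Ioo 0 (1 / 32)) (hJ : 0 ≤ J)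
    (hJF : J ≤ 3 * F) (hJt : J ≤ t) (hb : min F t ≤ b) (h : (1 - 2 * ε) * b - J / 4 ≤ ε * a) :
    min F ((32 * ε)⁻¹ * t) ≤ a := by
  obtain ⟨hε0, hε1⟩ := hε
  rcases le_total F t with hFt | htF
  · rw [min_eq_left hFt] at hb
    refine (min_le_left _ _).trans (le_of_mul_le_mul_left ?_ hε0)
    nlinarith
  · rw [min_eq_right htF] at hb
    refine (min_le_right _ _).trans ?_
    rw [inv_mul_le_iff₀ (by positivity)]
    nlinarith

section Shell

variable {α β : Type*} [Fintype α] {toE fromE : α → β → Prop}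

lemma sub_le_card_of_forall_fromE_mem [Finite β] (hsub : ∀ i j, fromE i j → toE i j)
    {M : Finset α} {N : Set α} {K c : ℝ} {B : Finset β} (hB : ExpandsOn toE c B)
    (hdeg : ∀ j ∈ B, K ≤ ({i | fromE i j} \ N).ncard) {S : Finset α}
    (hS : ∀ i ∉ M, i ∉ N → ∀ j ∈ B, fromE i j → i ∈ S) :
    K * #B - c * #B - ∑ i ∈ M, ({j | fromE i j}.ncard : ℝ) ≤ #S := by
  classical
  have hsplit : ∀ j ∈ B, K ≤ #(S.bipartiteBelow fromE j) + #(M.bipartiteBelow fromE j) := by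
    intro j hj
    have hcover :
        {i | fromE i j} \ N ⊆ ↑(S.bipartiteBelow fromE j ∪ M.bipartiteBelow fromE j) := by
      rintro i ⟨hij : fromE i j, hiN⟩
      by_cases hiM : i ∈ M
      · simp [hiM, hij]
      · simp [hS i hiM hiN j hj hij, hij]
    refine (hdeg j hj).trans ?_
    exact_mod_cast (Set.ncard_le_ncard hcover).trans ((Set.ncard_coe_finset _).trans_le
      (card_union_le _ _))
  have hS : ∑ j ∈ B, (#(S.bipartiteBelow fromE j) : ℝ) ≤ #S + c * #B := by
    rw [← Nat.cast_sum, ← sum_card_bipartiteAbove_eq_sum_card_bipartiteBelow, Nat.cast_sum]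
    refine (sum_le_sum fun i _ => ?_).trans (sum_card_bipartiteAbove_le toE hB S)
    exact_mod_cast card_le_card (monotone_filter_right B fun j _ => hsub i j)
  have hM :
      ∑ j ∈ B, (#(M.bipartiteBelow fromE j) : ℝ) ≤ ∑ i ∈ M, ({j | fromE i j}.ncard : ℝ) := by
    exact_mod_cast sum_card_bipartiteBelow_le_sum_ncard fromE M B
  have hK :
      K * #B ≤ ∑ j ∈ B, ((#(S.bipartiteBelow fromE j) : ℝ) + #(M.bipartiteBelow fromE j)) := by
    rw [mul_comm, ← nsmul_eq_mul]
    exact card_nsmul_le_sum _ _ _ hsplit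
  rw [sum_add_distrib] at hK
  linarith

lemma sub_le_mul_card_of_redirect [Finite β] [DecidableEq β] (hsub : ∀ i j, fromE i j → toE i j)
    {M : Finset α} {N : Set α} {K c : ℝ} (hc : 0 ≤ c) {B A' : Finset β} (hB : ExpandsOn toE c B)
    (hBA' : ExpandsOn toE c (B ∪ A')) (hdeg : ∀ j ∈ B, K ≤ ({i | fromE i j} \ N).ncard)
    (hnext : ∀ j ∈ B, ∀ i ∉ M, i ∉ N → fromE i j → ∃ j' ∈ A', j' ≠ j ∧ toE i j') :
    K * #B - 2 * c * #B - ∑ i ∈ M, ({j | fromE i j}.ncard : ℝ) ≤ c * #A' := by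
  classical
  set S : Finset α := {i | i ∉ M ∧ i ∉ N ∧ ∃ j ∈ B, fromE i j}
  have hlower := sub_le_card_of_forall_fromE_mem hsub hB hdeg (S := S)
    fun i hiM hiN j hj hij => by simpa [S] using ⟨hiM, hiN, j, hj, hij⟩
  have hupper : (#S : ℝ) ≤ c * #(B ∪ A') := by
    refine card_le_of_two_le_card_bipartiteAbove toE hBA' fun i hi => ?_
    obtain ⟨hiM, hiN, j, hj, hij⟩ := by simpa [S] using hi
    obtain ⟨j', hj', hne, hij'⟩ := hnext j hj i hiM hiN hij
    calc 2 = #{j, j'} := (card_pair hne.symm).symm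
      _ ≤ _ := card_le_card <| by
        simp [insert_subset_iff, mem_bipartiteAbove, hj, hj', hsub i j hij, hij']
  have hunion : c * #(B ∪ A') ≤ c * (#B + #A') :=
    mul_le_mul_of_nonneg_left (by exact_mod_cast card_union_le B A') hc
  linarith

lemma min_le_ncard_of_shell_layer [Fintype β] (hsub : ∀ i j, fromE i j → toE i j)
    {M : Finset α} {N : Set α} {K ε D t : ℝ} {J : ℕ} (hK : 0 < K) (hε : ε ∈ Set.Ioo 0 (1 / 32))
    (hexp : ∀ I : Finset β, (#I : ℝ) ≤ D → ExpandsOn toE (ε * K) I) (hJD : (J : ℝ) ≤ D / 2)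
    (hM : (2 / K) * ∑ i ∈ M, ({j | fromE i j}.ncard : ℝ) ≤ J / 2) (hJt : (J : ℝ) ≤ t)
    {A A' : Set β} (hdeg : ∀ j ∈ A, K ≤ ({i | fromE i j} \ N).ncard)
    (hnext : ∀ j ∈ A, ∀ i ∉ M, i ∉ N → fromE i j → ∃ j' ∈ A', j' ≠ j ∧ toE i j')
    (hA : min (⌊D / 4⌋ : ℝ) t ≤ A.ncard) :
    min (⌊D / 4⌋ : ℝ) ((32 * ε)⁻¹ * t) ≤ A'.ncard := by
  classical
  set F := ⌊D / 4⌋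
  rcases lt_or_ge F 1 with hF | hF
  · have : (F : ℝ) ≤ 0 := by exact_mod_cast Int.lt_add_one_iff.mp hF
    exact (min_le_left _ _).trans (this.trans (Nat.cast_nonneg _))
  rcases le_or_gt (F : ℝ) A'.ncard with hA'F | hA'F
  · exact (min_le_left _ _).trans hA'F
  have hFD : (F : ℝ) ≤ D / 4 := Int.floor_le _
  have hF1 : (1 : ℝ) ≤ F := by exact_mod_cast hF
  obtain ⟨B, hBA, hBcard⟩ := exists_subset_card_eq (min_le_left #A.toFinset F.toNat)
  have hFnat : ((F.toNat : ℕ) : ℝ) = F := by exact_mod_cast Int.toNat_of_nonneg (by omega)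
  have hB : (#B : ℝ) = min (A.ncard : ℝ) F := by
    rw [hBcard, Nat.cast_min, hFnat, Set.ncard_eq_toFinset_card']
  have hBF : (#B : ℝ) ≤ F := hB ▸ min_le_right _ _
  have hBA' : (#(B ∪ A'.toFinset) : ℝ) ≤ D := by
    have : (#(B ∪ A'.toFinset) : ℝ) ≤ #B + A'.ncard := by
      rw [Set.ncard_eq_toFinset_card']; exact_mod_cast card_union_le _ _
    linarith
  have hlayer := sub_le_mul_card_of_redirect hsub (mul_nonneg hε.1.le hK.le) (hexp B (by linarith))
    (hexp _ hBA') (fun j hj => hdeg j (by simpa using hBA hj))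
    fun j hj i hiM hiN hij => by simpa using hnext j (by simpa using hBA hj) i hiM hiN hij
  have hMK : ∑ i ∈ M, ({j | fromE i j}.ncard : ℝ) ≤ K * J / 4 := by
    rw [div_mul_eq_mul_div, div_le_iff₀ hK] at hM
    linarith
  refine min_le_of_sub_le_mul hε J.cast_nonneg (natCast_le_three_mul_floor hJD hF) hJt
    (hB ▸ le_min hA (min_le_left _ _)) (le_of_mul_le_mul_left ?_ hK)
  rw [← Set.ncard_eq_toFinset_card'] at hlayer
  linarith

end Shell

theorem stmt4_general (k m : ℕ)
    (toE fromE : Fin k → Fin m → Prop)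
    (hsub : ∀ i j, fromE i j → toE i j)
    (M : Finset (Fin k)) (K : ℝ) (hK : 0 < K)
    (δ ε : ℝ) (hε : ε ∈ Set.Ioo (0:ℝ) (1/32))
    (hexp : ∀ I : Finset (Fin m), (I.card : ℝ) ≤ δ * m →
      (∑ j ∈ I, (Set.ncard {i | toE i j} : ℝ)) - ε * K * I.card ≤
        (Set.ncard {i | ∃ j ∈ I, toE i j} : ℝ))
    (T : ℕ → Set (Fin m))
    (hT : ∀ ℓ, 1 ≤ ℓ → T ℓ = {j | (∀ h ∈ Set.Ico 1 ℓ, j ∉ T h) ∧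
      ((Set.ncard ({i | fromE i j} \
        {i | ∃ j' ∈ ⋃ h ∈ Set.Ico 1 ℓ, T h, toE i j'}) : ℝ) ≤ K)})
    (J : Set (Fin m))
    (hJinf : J ⊆ {j | ∀ ℓ, 1 ≤ ℓ → j ∉ T ℓ})
    (hJcard : (J.ncard : ℝ) ≤ δ * m / 2)
    (hM : (2 / K) * ∑ i ∈ M, (Set.ncard {j | fromE i j} : ℝ) ≤ (J.ncard : ℝ) / 2)
    (d : ℕ) (𝒞 : ℕ → Set (Fin m))
    (h𝒞0 : 𝒞 0 = J)
    (hshell : ∀ ℓ < d, ∀ j ∈ 𝒞 ℓ, ∀ i : Fin k, i ∉ M → fromE i j →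
      ∃ j' ∈ 𝒞 (ℓ + 1), j' ≠ j ∧ toE i j') :
    ∀ ℓ ≤ d, min ((⌊δ * m / 4⌋ : ℤ) : ℝ) (((32 * ε)⁻¹) ^ ℓ * J.ncard) ≤
      ((𝒞 ℓ).ncard : ℝ) := by
  set Tinf := {j | ∀ ℓ, 1 ≤ ℓ → j ∉ T ℓ}
  set N := {i | ∃ j' ∈ ⋃ h ∈ Set.Ici 1, T h, toE i j'}
  have hnext : ∀ ℓ < d, ∀ j ∈ 𝒞 ℓ ∩ Tinf, ∀ i ∉ M, i ∉ N → fromE i j →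
      ∃ j' ∈ 𝒞 (ℓ + 1) ∩ Tinf, j' ≠ j ∧ toE i j' := by
    intro ℓ hℓ j hj i hiM hiN hij
    obtain ⟨j', hj', hne, hij'⟩ := hshell ℓ hℓ j hj.1 i hiM hij
    exact ⟨j', ⟨hj', fun h hh hj'T => hiN ⟨j', Set.mem_biUnion hh hj'T, hij'⟩⟩, hne, hij'⟩
  have hgrowth : 1 ≤ (32 * ε)⁻¹ := one_le_inv₀ (by linarith [hε.1]) |>.2 (by linarith [hε.2])
  suffices ∀ ℓ ≤ d, min ((⌊δ * m / 4⌋ : ℤ) : ℝ) ((32 * ε)⁻¹ ^ ℓ * J.ncard) ≤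
      ((𝒞 ℓ ∩ Tinf).ncard : ℝ) from fun ℓ hℓ =>
    (this ℓ hℓ).trans (by exact_mod_cast Set.ncard_inter_le_ncard_left _ _)
  intro ℓ
  induction ℓ with
  | zero => simp [h𝒞0, Set.inter_eq_left.2 hJinf]
  | succ n ih =>
    intro hn
    rw [pow_succ', mul_assoc]
    exact min_le_ncard_of_shell_layer hsub hK hε hexp hJcard hM
      (le_mul_of_one_le_left J.ncard.cast_nonneg (one_le_pow₀ hgrowth))
      (fun j hj => (lt_ncard_diff_of_forall_notMem hT hj.2).le) (hnext n hn) (ih (by omega))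

/-- expansion property of `M`-shells.  The graph has left vertices `Fin k`
and right vertices `Fin m`, encoded by `toE` (`i → j`) and `fromE` (`i ← j`) with
`fromE ⊆ toE`.  For a right vertex `j`, `∂_in(j) = {i | toE i j}` and
`∂_out(j) = {i | fromE i j}`; for a left vertex `i`, `∂_out(i) = {j | fromE i j}`.
`T` is the type family of the graph at parameter `K` (defining recursion hypothesized),
and `T_{K,∞}` is the set of right vertices in no finite type.  An `M`-shell of depth `d`
centered in `J` is a sequence `𝒞 0 = J, 𝒞 1, …, 𝒞 d` of sets of right vertices such that
for `ℓ < d`, `j ∈ 𝒞 ℓ` and any left vertex `i ∉ M` with `i ← j`, some `j' ≠ j` in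
`𝒞 (ℓ+1)` satisfies `i → j'`.  Conclusion: the layers grow as
`|𝒞 ℓ| ≥ min(⌊δm/4⌋, (32ε)^{-ℓ}|J|)`. -/
theorem stmt4 (k m : ℕ) (hk : 0 < k) (hm : 0 < m)
    (toE fromE : Fin k → Fin m → Prop)
    (hsub : ∀ i j, fromE i j → toE i j)
    (M : Finset (Fin k)) (K : ℝ) (hK : 0 < K)
    (δ ε : ℝ) (hδ : δ ∈ Set.Ioc (0:ℝ) 1) (hε : ε ∈ Set.Ioo (0:ℝ) (1/32))
    (hexp : ∀ I : Finset (Fin m), (I.card : ℝ) ≤ δ * m →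
      (∑ j ∈ I, (Set.ncard {i | toE i j} : ℝ)) - ε * K * I.card ≤
        (Set.ncard {i | ∃ j ∈ I, toE i j} : ℝ))
    (T : ℕ → Set (Fin m))
    (hT : ∀ ℓ, 1 ≤ ℓ → T ℓ = {j | (∀ h ∈ Set.Ico 1 ℓ, j ∉ T h) ∧
      ((Set.ncard ({i | fromE i j} \
        {i | ∃ j' ∈ ⋃ h ∈ Set.Ico 1 ℓ, T h, toE i j'}) : ℝ) ≤ K)})
    (J : Set (Fin m)) (hJne : J.Nonempty)
    (hJinf : J ⊆ {j | ∀ ℓ, 1 ≤ ℓ → j ∉ T ℓ})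
    (hJcard : (J.ncard : ℝ) ≤ δ * m / 2)
    (hM : (2 / K) * ∑ i ∈ M, (Set.ncard {j | fromE i j} : ℝ) ≤ (J.ncard : ℝ) / 2)
    (d : ℕ) (hd : 1 ≤ d) (𝒞 : ℕ → Set (Fin m))
    (h𝒞0 : 𝒞 0 = J)
    (hshell : ∀ ℓ < d, ∀ j ∈ 𝒞 ℓ, ∀ i : Fin k, i ∉ M → fromE i j →
      ∃ j' ∈ 𝒞 (ℓ + 1), j' ≠ j ∧ toE i j') :
    ∀ ℓ ≤ d, min ((⌊δ * m / 4⌋ : ℤ) : ℝ) (((32 * ε)⁻¹) ^ ℓ * J.ncard) ≤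
      ((𝒞 ℓ).ncard : ℝ) :=
  stmt4_general k m toE fromE hsub M K hK δ ε hε hexp T hT J hJinf hJcard hM d 𝒞 h𝒞0 hshell
end

section
/- Let η ∈ (0,1), ρ > 0, k < n, ℓ := ⌊c̃η³ρ²k⌋, and let 𝒱 be the set of k×n matrices V with orthonormal rows whose every row r satisfies r*_{⌊ηn⌋} ≥ ρ/√n. Let B be an n×n matrix such that ‖BVᵀ‖ ≤ s for some V ∈ 𝒱 and s > 0. Let I ⊂ [n] with |I| = ℓ be a set satisfying: ‖V_j‖₂ ≤ √(Ck/(ηn)) for all j ∈ I, and ‖Σ_{j∈I} z_j V_j‖₂ ≥ cρ√(ηk/n)‖z‖₂ for all z ∈ ℂ^I. Let P_I denote the orthogonal projection onto the orthogonal complement of span{col_u(B) : u ∈ [n]\I}. Then ‖P_I col_j(B)‖₂ ≤ (√2/(cρ))·√(n/(ηk))·s for at least ℓ/2 indices j ∈ I. -/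
/-!
Let `X j` be the projection of the `j`-th column of `B` onto the orthogonal complement of the
columns outside `I`, so that `X j = 0` for `j ∉ I`. The operator `P B Vᵀ` maps the `i`-th basis
vector to `∑ j, V i j • X j`; its rank is at most `|I|` and its norm at most `s`, so its
squared Hilbert–Schmidt norm is at most `|I| s²`. Reading the same double sum coordinatewise
and applying the restricted invertibility bound to each coordinate vector `(X j m)_j` bounds it
below by `(cρ√(ηk/n))² ∑_{j ∈ I} ‖X j‖²`. Markov's inequality then gives the threshold for at
least half of the indices in `I`.
-/

open Finset

/-- The `r`-th largest absolute value of the coordinates of a vector `x : Fin n → ℂ`. -/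
noncomputable def orderStat {n : ℕ} (x : Fin n → ℂ) (r : ℕ) : ℝ :=
  sSup {t : ℝ | r ≤ Set.ncard {i : Fin n | t ≤ ‖x i‖}}

namespace ContinuousLinearMap

variable {𝕜 E F ι : Type*} [RCLike 𝕜] [NormedAddCommGroup E] [InnerProductSpace 𝕜 E]
  [CompleteSpace E] [NormedAddCommGroup F] [InnerProductSpace 𝕜 F] [CompleteSpace F] [Fintype ι]

theorem sum_sq_norm_apply_le_finrank_mul_sq_opNorm (b : OrthonormalBasis ι 𝕜 E) (A : E →L[𝕜] F)
    (W : Submodule 𝕜 F) [FiniteDimensional 𝕜 W] (hW : ∀ i, A (b i) ∈ W) :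
    ∑ i, ‖A (b i)‖ ^ 2 ≤ Module.finrank 𝕜 W * ‖A‖ ^ 2 := by
  set w := stdOrthonormalBasis 𝕜 W
  have hadj (t) : ‖adjoint A (w t)‖ ≤ ‖A‖ := by
    have hw : ‖(w t : F)‖ = 1 := by rw [Submodule.norm_coe]; exact w.orthonormal.1 t
    simpa [hw] using (adjoint A).le_opNorm (w t)
  calc ∑ i, ‖A (b i)‖ ^ 2 = ∑ i, ∑ t, ‖inner 𝕜 (w t : F) (A (b i))‖ ^ 2 := by
        refine sum_congr rfl fun i _ => ?_
        simpa using (w.sum_sq_norm_inner_right ⟨_, hW i⟩).symm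
    _ = ∑ t, ∑ i, ‖inner 𝕜 (adjoint A (w t)) (b i)‖ ^ 2 := by
        rw [sum_comm]
        simp only [adjoint_inner_left]
    _ = ∑ t, ‖adjoint A (w t)‖ ^ 2 := by simp only [b.sum_sq_norm_inner_left]
    _ ≤ ∑ _t : Fin (Module.finrank 𝕜 W), ‖A‖ ^ 2 := by gcongr with t; exact hadj t
    _ = Module.finrank 𝕜 W * ‖A‖ ^ 2 := by simp

end ContinuousLinearMap

namespace EuclideanSpace

variable {𝕜 ι κ μ : Type*} [RCLike 𝕜] [Fintype ι] [Fintype κ] [Fintype μ]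

theorem sum_sq_norm_sum_smul_comm (v : ι → EuclideanSpace 𝕜 κ) (X : ι → EuclideanSpace 𝕜 μ) :
    ∑ a, ‖∑ j, v j a • X j‖ ^ 2 = ∑ m, ‖∑ j, X j m • v j‖ ^ 2 := by
  simp only [EuclideanSpace.norm_sq_eq, WithLp.ofLp_sum, Finset.sum_apply, PiLp.smul_apply,
    smul_eq_mul, mul_comm]
  exact sum_comm

theorem sq_mul_sum_sq_norm_le_sum_sq_norm_sum_smul (v : ι → EuclideanSpace 𝕜 κ)
    (X : ι → EuclideanSpace 𝕜 μ) (I : Finset ι) {α : ℝ} (hα : 0 ≤ α)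
    (hlow : ∀ z : ι → 𝕜, (∀ j ∉ I, z j = 0) → α * √(∑ j, ‖z j‖ ^ 2) ≤ ‖∑ j, z j • v j‖)
    (hX : ∀ j ∉ I, X j = 0) :
    α ^ 2 * ∑ j, ‖X j‖ ^ 2 ≤ ∑ a, ‖∑ j, v j a • X j‖ ^ 2 := by
  rw [sum_sq_norm_sum_smul_comm]
  calc α ^ 2 * ∑ j, ‖X j‖ ^ 2 = ∑ m, (α * √(∑ j, ‖X j m‖ ^ 2)) ^ 2 := by
        simp only [EuclideanSpace.norm_sq_eq, mul_pow,
          Real.sq_sqrt (sum_nonneg fun _ _ => sq_nonneg _), ← mul_sum]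
        rw [sum_comm]
    _ ≤ ∑ m, ‖∑ j, X j m • v j‖ ^ 2 := by
        gcongr with m
        exact hlow _ fun j hj => by simp [hX j hj]

end EuclideanSpace

namespace Matrix

variable {𝕜 ι κ μ : Type*} [RCLike 𝕜] [Fintype ι] [Fintype κ] [DecidableEq κ]

theorem toEuclideanLin_mul_transpose_single_one (B : Matrix μ ι 𝕜) (V : Matrix κ ι 𝕜) (i : κ) :
    toEuclideanLin (B * V.transpose) (EuclideanSpace.single i 1) =
      ∑ j, V i j • WithLp.toLp 2 (fun m => B m j) := by
  ext m
  simp [toLpLin_apply, mul_apply, mul_comm]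

theorem sum_sq_norm_sum_smul_map_col_le [Fintype μ] (B : Matrix μ ι 𝕜) (V : Matrix κ ι 𝕜)
    (P : EuclideanSpace 𝕜 μ →L[𝕜] EuclideanSpace 𝕜 μ) (hP : ‖P‖ ≤ 1) (I : Finset ι)
    (hPI : ∀ j ∉ I, P (WithLp.toLp 2 (fun m => B m j)) = 0) {s : ℝ}
    (hBV : ‖LinearMap.toContinuousLinearMap (toEuclideanLin (B * V.transpose))‖ ≤ s) :
    ∑ i, ‖∑ j, V i j • P (WithLp.toLp 2 (fun m => B m j))‖ ^ 2 ≤ #I * s ^ 2 := by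
  classical
  set X := fun j => P (WithLp.toLp 2 (fun m => B m j))
  set A := P ∘L LinearMap.toContinuousLinearMap (toEuclideanLin (B * V.transpose))
  have hA : ‖A‖ ≤ s := (ContinuousLinearMap.opNorm_comp_le _ _).trans <| by
    simpa using mul_le_mul hP hBV (norm_nonneg _) zero_le_one
  have hAe (i) : A (EuclideanSpace.basisFun κ 𝕜 i) = ∑ j, V i j • X j := by
    simp only [A, X, ContinuousLinearMap.comp_apply, EuclideanSpace.basisFun_apply,
      LinearMap.coe_toContinuousLinearMap', toEuclideanLin_mul_transpose_single_one, map_sum,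
      map_smul]
  have hAW (i) : A (EuclideanSpace.basisFun κ 𝕜 i) ∈ Submodule.span 𝕜 (I.image X : Set _) := by
    rw [hAe]
    refine Submodule.sum_mem _ fun j _ => Submodule.smul_mem _ _ ?_
    by_cases hj : j ∈ I
    · exact Submodule.subset_span (by simpa using mem_image_of_mem X hj)
    · simp [X, hPI j hj]
  have hrank : Set.finrank 𝕜 (I.image X : Set (EuclideanSpace 𝕜 μ)) ≤ #I :=
    (finrank_span_finset_le_card (I.image X)).trans card_image_le
  calc ∑ i, ‖∑ j, V i j • X j‖ ^ 2 = ∑ i, ‖A (EuclideanSpace.basisFun κ 𝕜 i)‖ ^ 2 := by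
        simp only [hAe]
    _ ≤ _ := A.sum_sq_norm_apply_le_finrank_mul_sq_opNorm _ _ hAW
    _ ≤ #I * s ^ 2 := by
        gcongr
        exact_mod_cast hrank

end Matrix

theorem Finset.card_le_two_mul_card_filter_le {ι : Type*} (I : Finset ι) (g : ι → ℝ) {t : ℝ}
    (ht : 0 < t) (hsum : 2 * ∑ j ∈ I, g j ^ 2 ≤ #I * t ^ 2) :
    (#I : ℝ) ≤ 2 * #(I.filter (g · ≤ t)) := by
  set L := I.filter (fun j => ¬ g j ≤ t)
  have hL : #L * t ^ 2 ≤ ∑ j ∈ I, g j ^ 2 := calc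
    #L * t ^ 2 = ∑ _j ∈ L, t ^ 2 := by simp
    _ ≤ ∑ j ∈ L, g j ^ 2 := by
        gcongr with j hj
        exact (not_le.1 (mem_filter.1 hj).2).le
    _ ≤ ∑ j ∈ I, g j ^ 2 :=
        sum_le_sum_of_subset_of_nonneg (filter_subset _ _) fun _ _ _ => sq_nonneg _
  have hcard : (#I : ℝ) = #(I.filter (g · ≤ t)) + #L := by
    exact_mod_cast (card_filter_add_card_filter_not (s := I) (g · ≤ t)).symm
  nlinarith [pow_pos ht 2]

theorem stmt11_general (ctil c : ℝ) (hc : 0 < c)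
    (n k : ℕ) (η ρ : ℝ) (hη : η ∈ Set.Ioo (0:ℝ) 1) (hρ : 0 < ρ)
    (V : Matrix (Fin k) (Fin n) ℂ)
    (B : Matrix (Fin n) (Fin n) ℂ) (s : ℝ) (hs : 0 < s)
    (hBV : ‖LinearMap.toContinuousLinearMap
      (Matrix.toEuclideanLin (B * V.transpose))‖ ≤ s)
    (I : Finset (Fin n)) (hI : I.card = ⌊ctil * η ^ 3 * ρ ^ 2 * k⌋₊)
    (hlow : ∀ z : Fin n → ℂ, (∀ j ∉ I, z j = 0) →
      c * ρ * Real.sqrt (η * k / n) * Real.sqrt (∑ j, ‖z j‖ ^ 2) ≤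
        ‖∑ j, z j • (show EuclideanSpace ℂ (Fin k) from WithLp.toLp 2 (fun i => V i j))‖) :
    ∃ S : Finset (Fin n), S ⊆ I ∧ (I.card : ℝ) ≤ 2 * S.card ∧
      ∀ j ∈ S,
        ‖(Submodule.orthogonalProjectionOnto
            ((Submodule.span ℂ {v : EuclideanSpace ℂ (Fin n) |
              ∃ u ∉ I, v = WithLp.toLp 2 (fun i => B i u)})ᗮ)
            (show EuclideanSpace ℂ (Fin n) from WithLp.toLp 2 (fun i => B i j)) :
          EuclideanSpace ℂ (Fin n))‖ ≤
        Real.sqrt 2 / (c * ρ) * Real.sqrt ((n : ℝ) / (η * k)) * s := by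
  rcases I.eq_empty_or_nonempty with rfl | ⟨j₀, hj₀⟩
  · exact ⟨∅, by simp⟩
  have hn : 0 < n := Fin.pos j₀
  have hk : 0 < k := Nat.pos_of_ne_zero fun hk => by simp [hk] at hI; simp [hI] at hj₀
  have hη₀ := hη.1
  set K := Submodule.span ℂ {v : EuclideanSpace ℂ (Fin n) | ∃ u ∉ I, v = WithLp.toLp 2 (fun i => B i u)}
  set X := fun j => Kᗮ.starProjection (WithLp.toLp 2 (fun i => B i j))
  have hX (j) (hj : j ∉ I) : X j = 0 :=
    Submodule.starProjection_orthogonal_apply_eq_zero (Submodule.subset_span ⟨j, hj, rfl⟩)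
  set α := c * ρ * √(η * k / n)
  have key : α ^ 2 * ∑ j ∈ I, ‖X j‖ ^ 2 ≤ #I * s ^ 2 := by
    rw [sum_subset (subset_univ I) fun j _ hj => by simp [hX j hj]]
    exact (EuclideanSpace.sq_mul_sum_sq_norm_le_sum_sq_norm_sum_smul
      (fun j => WithLp.toLp 2 (fun i => V i j)) X I (by positivity) hlow hX).trans
      (B.sum_sq_norm_sum_smul_map_col_le V _ Kᗮ.starProjection_norm_le I hX hBV)
  set t := √2 / (c * ρ) * √(n / (η * k)) * s
  have hαt : (α * t) ^ 2 = 2 * s ^ 2 := by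
    simp only [α, t, mul_pow, div_pow, Real.sq_sqrt zero_le_two,
      Real.sq_sqrt (by positivity : (0:ℝ) ≤ η * k / n),
      Real.sq_sqrt (by positivity : (0:ℝ) ≤ n / (η * k))]
    field_simp
  refine ⟨I.filter (‖X ·‖ ≤ t), filter_subset _ _,
    I.card_le_two_mul_card_filter_le _ (by positivity) ?_, fun j hj => (mem_filter.1 hj).2⟩
  have hα : 0 < α ^ 2 := by positivity
  nlinarith

/-- from a bound `‖BVᵀ‖ ≤ s` (operator norm), where `V` is a `k × n`
matrix with orthonormal, spread rows, and a set `I` of cardinality `ℓ = ⌊c̃η³ρ²k⌋`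
satisfying the conclusions of the randomized restricted invertibility lemma, one gets
`‖P_I col_j(B)‖₂ ≤ (√2/(cρ))·√(n/(ηk))·s` for at least `ℓ/2` indices `j ∈ I`, where
`P_I` is the orthogonal projection onto the orthogonal complement of the span of the
columns of `B` outside `I`. -/
theorem stmt11 (ctil C c : ℝ) (hctil : 0 < ctil) (hC : 0 < C) (hc : 0 < c)
    (n k : ℕ) (η ρ : ℝ) (hη : η ∈ Set.Ioo (0:ℝ) 1) (hρ : 0 < ρ) (hkn : k < n)
    (V : Matrix (Fin k) (Fin n) ℂ)
    (hVon : Orthonormal ℂ (fun i => (show EuclideanSpace ℂ (Fin n) from WithLp.toLp 2 (fun j => V i j))))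
    (hVspread : ∀ i : Fin k, ρ / Real.sqrt n ≤ orderStat (fun j => V i j) ⌊η * n⌋₊)
    (B : Matrix (Fin n) (Fin n) ℂ) (s : ℝ) (hs : 0 < s)
    (hBV : ‖LinearMap.toContinuousLinearMap
      (Matrix.toEuclideanLin (B * V.transpose))‖ ≤ s)
    (I : Finset (Fin n)) (hI : I.card = ⌊ctil * η ^ 3 * ρ ^ 2 * k⌋₊)
    (hcol : ∀ j ∈ I,
      ‖(show EuclideanSpace ℂ (Fin k) from WithLp.toLp 2 (fun i => V i j))‖ ≤ Real.sqrt (C * k / (η * n)))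
    (hlow : ∀ z : Fin n → ℂ, (∀ j ∉ I, z j = 0) →
      c * ρ * Real.sqrt (η * k / n) * Real.sqrt (∑ j, ‖z j‖ ^ 2) ≤
        ‖∑ j, z j • (show EuclideanSpace ℂ (Fin k) from WithLp.toLp 2 (fun i => V i j))‖) :
    ∃ S : Finset (Fin n), S ⊆ I ∧ (I.card : ℝ) ≤ 2 * S.card ∧
      ∀ j ∈ S,
        ‖(Submodule.orthogonalProjectionOnto
            ((Submodule.span ℂ {v : EuclideanSpace ℂ (Fin n) |
              ∃ u ∉ I, v = WithLp.toLp 2 (fun i => B i u)})ᗮ)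
            (show EuclideanSpace ℂ (Fin n) from WithLp.toLp 2 (fun i => B i j)) :
          EuclideanSpace ℂ (Fin n))‖ ≤
        Real.sqrt 2 / (c * ρ) * Real.sqrt ((n : ℝ) / (η * k)) * s :=
  stmt11_general ctil c hc n k η ρ hη hρ V B s hs hBV I hI hlow
end

section
/- Let B be an n×n complex matrix whose singular values satisfy s_{n−i}(B) ≥ ci/n for all i ≥ Ck (where n > k ≥ 1 and c, C > 0 are constants), and let w = i·(k/n) be purely imaginary. Then the imaginary part of the Stieltjes transform m_w := (1/(2n))·tr((H − w·Id_{2n})^{-1}), where H is the Hermitization [[0, B],[B*, 0]], satisfies Im(m_w) = (1/(2n)) Σ_{i=1}^n 2·Im(w)/(|w|² + s_i(B)²) ≤ C', where C' depends only on c and C. -/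
/-!
The resolvent of the Hermitization `H = [[0, B], [Bᴴ, 0]]` at `w` is the block matrix
`[[w X⁻¹, B Y⁻¹], [Bᴴ X⁻¹, w Y⁻¹]]` with `X = BBᴴ - w²` and `Y = BᴴB - w²`, and `tr X⁻¹ = tr Y⁻¹`
because `X⁻¹ B = B Y⁻¹`. At `w = i t` with `t = k/n` this gives
`Im m_w = (1/2n) ∑ 2t / (t² + s_i²)`. A term is at most `2/t = 2n/k`, which is spent on the
`⌈Ck⌉ + 1` smallest singular values; for the others `s_{n-i} ≥ ci/n` bounds it by `2kn / (c² i²)`,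
and `∑_{i > Ck} 1/i² ≤ 2/(Ck)`. Altogether `Im m_w ≤ C + 2 + 2/(c² C)`.
-/

/-- The `r`-th largest singular value (1-indexed) of an `n × n` complex matrix. -/
noncomputable def sval {n : ℕ} (B : Matrix (Fin n) (Fin n) ℂ) (r : ℕ) : ℝ :=
  sSup {t : ℝ | r ≤ Set.ncard {i : Fin n |
    t ≤ Real.sqrt ((Matrix.isHermitian_conjTranspose_mul_self B).eigenvalues i)}}

open Finset

namespace Matrix

section Field

variable {K m n : Type*} [Field K] [Fintype m] [Fintype n]

theorem trace_fromBlocks (A : Matrix m m K) (B : Matrix m n K) (C : Matrix n m K)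
    (D : Matrix n n K) : (fromBlocks A B C D).trace = A.trace + D.trace := by
  simp [trace, Fintype.sum_sum_type]

variable [DecidableEq m] [DecidableEq n]

theorem trace_inv_fromBlocks_zero_sub_smul_one (B : Matrix m n K) (C : Matrix n m K) (w : K)
    (hX : IsUnit (B * C - w ^ 2 • 1).det) (hY : IsUnit (C * B - w ^ 2 • 1).det) :
    (fromBlocks 0 B C 0 - w • 1)⁻¹.trace =
      w * ((B * C - w ^ 2 • 1)⁻¹.trace + (C * B - w ^ 2 • 1)⁻¹.trace) := by
  set X := B * C - w ^ 2 • 1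
  set Y := C * B - w ^ 2 • 1
  have hinv : (fromBlocks 0 B C 0 - w • 1) *
      fromBlocks (w • X⁻¹) (B * Y⁻¹) (C * X⁻¹) (w • Y⁻¹) = 1 := by
    have hX' : (B * C - w ^ 2 • 1) * X⁻¹ = 1 := mul_nonsing_inv X hX
    have hY' : (C * B - w ^ 2 • 1) * Y⁻¹ = 1 := mul_nonsing_inv Y hY
    rw [← fromBlocks_one, fromBlocks_smul, sub_eq_add_neg, fromBlocks_neg, fromBlocks_add,
      fromBlocks_multiply]
    simp only [zero_add, smul_zero, neg_zero, add_zero, Matrix.neg_mul, smul_mul, Matrix.mul_smul,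
      Matrix.one_mul]
    congr 1
    · conv_rhs => rw [← hX']
      simp only [sub_mul, smul_mul, Matrix.one_mul, Matrix.mul_assoc]
      module
    · module
    · module
    · conv_rhs => rw [← hY']
      simp only [sub_mul, smul_mul, Matrix.one_mul, Matrix.mul_assoc]
      module
  rw [inv_eq_right_inv hinv, trace_fromBlocks, trace_smul, trace_smul, smul_eq_mul, smul_eq_mul,
    mul_add]

theorem trace_inv_mul_add_smul_one_comm (A B : Matrix n n K) {s : K} (hs : s ≠ 0)
    (hX : IsUnit (A * B + s • 1).det) (hY : IsUnit (B * A + s • 1).det) :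
    (A * B + s • 1)⁻¹.trace = (B * A + s • 1)⁻¹.trace := by
  set X := A * B + s • 1
  set Y := B * A + s • 1
  have hXA : X * A = A * Y := by
    simp only [X, Y, Matrix.add_mul, Matrix.mul_add, smul_mul, Matrix.mul_smul, Matrix.one_mul,
      Matrix.mul_one, Matrix.mul_assoc]
  have hpush : X⁻¹ * A = A * Y⁻¹ := by
    calc X⁻¹ * A = X⁻¹ * (A * Y) * Y⁻¹ := by
          rw [Matrix.mul_assoc, Matrix.mul_assoc, mul_nonsing_inv Y hY, Matrix.mul_one]
      _ = A * Y⁻¹ := by rw [← hXA, ← Matrix.mul_assoc, nonsing_inv_mul X hX, Matrix.one_mul]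
  have hX' : A * B * X⁻¹ + s • X⁻¹ = 1 := by
    rw [← mul_nonsing_inv X hX, Matrix.add_mul, smul_mul, Matrix.one_mul]
  have hY' : B * A * Y⁻¹ + s • Y⁻¹ = 1 := by
    rw [← mul_nonsing_inv Y hY, Matrix.add_mul, smul_mul, Matrix.one_mul]
  have hcyc : (A * B * X⁻¹).trace = (B * A * Y⁻¹).trace := by
    rw [Matrix.mul_assoc, trace_mul_comm, Matrix.mul_assoc, hpush, Matrix.mul_assoc]
  have key : s * X⁻¹.trace = s * Y⁻¹.trace := by
    have h1 := congrArg trace hX'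
    have h2 := congrArg trace hY'
    rw [trace_add, trace_smul, smul_eq_mul, hcyc] at h1
    rw [trace_add, trace_smul, smul_eq_mul] at h2
    exact add_left_cancel (h1.trans h2.symm)
  exact mul_left_cancel₀ hs key

end Field

section Hermitian

variable {𝕜 n : Type*} [RCLike 𝕜] [Fintype n] [DecidableEq n] {A : Matrix n n 𝕜}

theorem IsHermitian.trace_cfc (hA : A.IsHermitian) (f : ℝ → ℝ) :
    (cfc f A).trace = ∑ i, (f (hA.eigenvalues i) : 𝕜) := by
  rw [hA.cfc_eq, IsHermitian.cfc, Unitary.conjStarAlgAut_apply, trace_mul_cycle,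
    Unitary.coe_star_mul_self, one_mul, trace_diagonal]
  rfl

theorem IsHermitian.add_smul_one_eq_cfc (hA : A.IsHermitian) (s : ℝ) :
    A + (s : 𝕜) • 1 = cfc (· + s) A := by
  rw [cfc_add_const s (fun x => x) A, cfc_id' ℝ A, algebraMap_eq_diagonal, smul_one_eq_diagonal]
  rfl

variable {s : ℝ}

theorem IsHermitian.add_ne_zero_of_mem_spectrum (hA : A.IsHermitian)
    (hs : ∀ i, hA.eigenvalues i + s ≠ 0) : ∀ x ∈ spectrum ℝ A, x + s ≠ 0 := by
  rw [hA.spectrum_real_eq_range_eigenvalues]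
  rintro _ ⟨i, rfl⟩
  exact hs i

theorem IsHermitian.isUnit_add_smul_one (hA : A.IsHermitian)
    (hs : ∀ i, hA.eigenvalues i + s ≠ 0) :
    IsUnit (A + (s : 𝕜) • 1) := by
  rw [hA.add_smul_one_eq_cfc, isUnit_cfc_iff (· + s) A]
  exact hA.add_ne_zero_of_mem_spectrum hs

theorem IsHermitian.trace_inv_add_smul_one (hA : A.IsHermitian)
    (hs : ∀ i, hA.eigenvalues i + s ≠ 0) :
    (A + (s : 𝕜) • 1)⁻¹.trace = ∑ i, (((hA.eigenvalues i + s)⁻¹ : ℝ) : 𝕜) := by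
  rw [hA.add_smul_one_eq_cfc, nonsing_inv_eq_ringInverse,
    ← cfc_inv _ _ (hA.add_ne_zero_of_mem_spectrum hs), hA.trace_cfc]

end Hermitian

theorem trace_inv_hermitization_sub_I_mul_smul_one {n : Type*} [Fintype n] [DecidableEq n]
    (B : Matrix n n ℂ) {t : ℝ} (ht : 0 < t) :
    (fromBlocks 0 B Bᴴ 0 - (Complex.I * t) • 1)⁻¹.trace =
      2 * Complex.I * t *
        ∑ i, (((isHermitian_conjTranspose_mul_self B).eigenvalues i + t ^ 2)⁻¹ : ℝ) := by
  set s : ℂ := ((t ^ 2 : ℝ) : ℂ)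
  have hshift (A : Matrix n n ℂ) : A - (Complex.I * t) ^ 2 • 1 = A + s • 1 := by
    rw [show (Complex.I * t) ^ 2 = -s by push_cast [s]; rw [mul_pow, Complex.I_sq, neg_one_mul],
      neg_smul, sub_neg_eq_add]
  have hposX (i : n) : (isHermitian_mul_conjTranspose_self B).eigenvalues i + t ^ 2 ≠ 0 := by
    have := eigenvalues_self_mul_conjTranspose_nonneg B i
    positivity
  have hposY (i : n) : (isHermitian_conjTranspose_mul_self B).eigenvalues i + t ^ 2 ≠ 0 := by
    have := eigenvalues_conjTranspose_mul_self_nonneg B i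
    positivity
  have hX : IsUnit (B * Bᴴ + s • 1).det :=
    (isUnit_iff_isUnit_det _).mp ((isHermitian_mul_conjTranspose_self B).isUnit_add_smul_one hposX)
  have hY : IsUnit (Bᴴ * B + s • 1).det :=
    (isUnit_iff_isUnit_det _).mp ((isHermitian_conjTranspose_mul_self B).isUnit_add_smul_one hposY)
  have hblock : (fromBlocks 0 B Bᴴ 0 - (Complex.I * t) • 1)⁻¹.trace =
      Complex.I * t * ((B * Bᴴ + s • 1)⁻¹.trace + (Bᴴ * B + s • 1)⁻¹.trace) := by
    simpa only [hshift] using trace_inv_fromBlocks_zero_sub_smul_one B Bᴴ (Complex.I * t)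
      (by rwa [hshift]) (by rwa [hshift])
  have hcomm : (B * Bᴴ + s • 1)⁻¹.trace = (Bᴴ * B + s • 1)⁻¹.trace :=
    trace_inv_mul_add_smul_one_comm B Bᴴ (Complex.ofReal_ne_zero.mpr (pow_pos ht 2).ne') hX hY
  have hspec : (Bᴴ * B + s • 1)⁻¹.trace =
      ∑ i, (((isHermitian_conjTranspose_mul_self B).eigenvalues i + t ^ 2)⁻¹ : ℝ) :=
    ((isHermitian_conjTranspose_mul_self B).trace_inv_add_smul_one hposY).trans
      (Complex.ofReal_sum _ _).symm
  rw [hblock, hcomm, hspec]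
  ring

end Matrix

noncomputable def nthLargest {ι : Type*} (g : ι → ℝ) (r : ℕ) : ℝ :=
  sSup {t | r ≤ {i | t ≤ g i}.ncard}

theorem nthLargest_comp_equiv {ι κ : Type*} (g : κ → ℝ) (e : ι ≃ κ) :
    nthLargest (g ∘ e) = nthLargest g := by
  ext r
  have hcard (t : ℝ) : {i | t ≤ (g ∘ e) i}.ncard = {j | t ≤ g j}.ncard :=
    Set.ncard_preimage_of_injective_subset_range (s := {j | t ≤ g j}) e.injective
      (by simp [e.surjective.range_eq])
  simp only [nthLargest, hcard]

theorem Monotone.le_ncard_setOf_le_iff {n : ℕ} {h : Fin n → ℝ} (hh : Monotone h) (i : Fin n)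
    (t : ℝ) : i + 1 ≤ {j | t ≤ h j}.ncard ↔ t ≤ h i.rev := by
  constructor
  · intro hcard
    by_contra! hlt
    have hsub : {j | t ≤ h j} ⊆ Set.Ioi i.rev := fun j hj =>
      lt_of_not_ge fun hji => (hlt.trans_le hj).not_ge (hh hji)
    have := Set.ncard_le_ncard hsub
    rw [← Finset.coe_Ioi, Set.ncard_coe_finset, Fin.card_Ioi, Fin.val_rev] at this
    omega
  · intro ht
    have hsub : Set.Ici i.rev ⊆ {j | t ≤ h j} := fun j hj => ht.trans (hh hj)
    have := Set.ncard_le_ncard hsub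
    rw [← Finset.coe_Ici, Set.ncard_coe_finset, Fin.card_Ici, Fin.val_rev] at this
    omega

theorem Monotone.nthLargest_eq {n : ℕ} {h : Fin n → ℝ} (hh : Monotone h) (i : Fin n) :
    nthLargest h (i + 1) = h i.rev := by
  have hset : {t | i + 1 ≤ {j | t ≤ h j}.ncard} = Set.Iic (h i.rev) := by
    ext t
    exact hh.le_ncard_setOf_le_iff i t
  rw [nthLargest, hset, csSup_Iic]

theorem sum_Icc_one_eq_sum_fin {M : Type*} [AddCommMonoid M] (n : ℕ) (F : ℕ → M) :
    ∑ r ∈ Icc 1 n, F r = ∑ i : Fin n, F (i + 1) := by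
  rw [← Ico_add_one_right_eq_Icc, sum_Ico_eq_sum_range, Nat.add_sub_cancel, sum_range]
  simp only [add_comm]

theorem sum_Icc_nthLargest {n : ℕ} (g : Fin n → ℝ) (f : ℝ → ℝ) :
    ∑ r ∈ Icc 1 n, f (nthLargest g r) = ∑ i, f (g i) := by
  set σ := Tuple.sort g
  have hσ : nthLargest g = nthLargest (g ∘ σ) := (nthLargest_comp_equiv g σ).symm
  rw [sum_Icc_one_eq_sum_fin, hσ]
  have hmono : Monotone (g ∘ σ) := Tuple.monotone_sort g
  simp only [hmono.nthLargest_eq]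
  exact (Equiv.sum_comp Fin.revPerm (fun i => f ((g ∘ σ) i))).trans
    (Equiv.sum_comp σ (fun i => f (g i)))

theorem sum_range_le_of_le_of_le_div_sq {φ : ℕ → ℝ} {M K : ℝ} {m n : ℕ} (hM0 : 0 ≤ M)
    (hK0 : 0 ≤ K) (hM : ∀ i < n, i ≤ m → φ i ≤ M) (hK : ∀ i < n, m < i → φ i ≤ K / i ^ 2) :
    ∑ i ∈ range n, φ i ≤ (m + 1) * M + 2 * K / (m + 1) := by
  rw [← sum_filter_add_sum_filter_not (range n) (· ≤ m)]
  have hhead : ∑ i ∈ range n with i ≤ m, φ i ≤ (m + 1) * M := by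
    have hcard : #{i ∈ range n | i ≤ m} ≤ m + 1 := by
      simpa using card_le_card (s := {i ∈ range n | i ≤ m}) (t := range (m + 1))
        (fun i => by simp only [mem_filter, mem_range]; omega)
    calc ∑ i ∈ range n with i ≤ m, φ i ≤ #{i ∈ range n | i ≤ m} • M :=
          sum_le_card_nsmul _ _ _ fun i hi => by
            simp only [mem_filter, mem_range] at hi
            exact hM i hi.1 hi.2
      _ ≤ (m + 1) * M := by
          rw [nsmul_eq_mul]; gcongr; exact_mod_cast hcard
  have htail : ∑ i ∈ range n with ¬i ≤ m, φ i ≤ 2 * K / (m + 1) := by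
    have hIoo : {i ∈ range n | ¬i ≤ m} = Ioo m n := by
      ext i
      simp only [mem_filter, mem_range, mem_Ioo]
      omega
    calc ∑ i ∈ range n with ¬i ≤ m, φ i ≤ ∑ i ∈ Ioo m n, K * ((i : ℝ) ^ 2)⁻¹ := by
          rw [hIoo]
          exact sum_le_sum fun i hi => by
            rw [mem_Ioo] at hi
            simpa [div_eq_mul_inv] using hK i hi.2 hi.1
      _ ≤ K * (2 / (m + 1)) := by rw [← mul_sum]; gcongr; exact sum_Ioo_inv_sq_le m n
      _ = 2 * K / (m + 1) := by ring
  linarith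

theorem sum_Icc_one_eq_sum_range_sub {M : Type*} [AddCommMonoid M] (n : ℕ) (F : ℕ → M) :
    ∑ r ∈ Icc 1 n, F r = ∑ i ∈ range n, F (n - i) :=
  sum_nbij' (n - ·) (n - ·) (fun r hr => by simp only [mem_Icc, mem_range] at *; omega)
    (fun i hi => by simp only [mem_Icc, mem_range] at *; omega)
    (fun r hr => by simp only [mem_Icc] at hr; omega)
    (fun i hi => by simp only [mem_range] at hi; omega)
    (fun r hr => by simp only [mem_Icc] at hr; congr; omega)

theorem sum_Icc_div_sq_add_sq_le {c C : ℝ} (hc : 0 < c) (hC : 0 < C) {n k : ℕ} (hk : 1 ≤ k)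
    (hn : 0 < n) (s : ℕ → ℝ) (hs : ∀ i : ℕ, C * k ≤ i → i < n → c * i / n ≤ s (n - i)) :
    1 / (2 * n) * ∑ r ∈ Icc 1 n, 2 * ((k : ℝ) / n) / (((k : ℝ) / n) ^ 2 + s r ^ 2) ≤
      C + 2 + 2 / (c ^ 2 * C) := by
  set t : ℝ := k / n
  have hnR : (0 : ℝ) < n := by exact_mod_cast hn
  have hkR : (1 : ℝ) ≤ k := by exact_mod_cast hk
  have ht : 0 < t := by positivity
  set m := ⌈C * k⌉₊
  have hm_ge : C * k ≤ m := Nat.le_ceil _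
  have hm_lt : (m : ℝ) < C * k + 1 := Nat.ceil_lt_add_one (by positivity)
  have hsmall (i : ℕ) : 2 * t / (t ^ 2 + s (n - i) ^ 2) ≤ 2 / t :=
    calc 2 * t / (t ^ 2 + s (n - i) ^ 2) ≤ 2 * t / t ^ 2 := by gcongr; nlinarith
      _ = 2 / t := by field_simp
  have hlarge (i : ℕ) (hin : i < n) (hmi : m < i) :
      2 * t / (t ^ 2 + s (n - i) ^ 2) ≤ 2 * t * n ^ 2 / c ^ 2 / i ^ 2 := by
    have hi : (m : ℝ) < i := by exact_mod_cast hmi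
    have ha : 0 < c * i / n := by
      have : (0 : ℝ) < i := by linarith
      positivity
    have has := hs i (by linarith) hin
    calc 2 * t / (t ^ 2 + s (n - i) ^ 2) ≤ 2 * t / (c * i / n) ^ 2 := by gcongr; nlinarith
      _ = 2 * t * n ^ 2 / c ^ 2 / i ^ 2 := by field_simp
  rw [sum_Icc_one_eq_sum_range_sub]
  calc 1 / (2 * n) * ∑ i ∈ range n, 2 * t / (t ^ 2 + s (n - i) ^ 2)
      ≤ 1 / (2 * n) * ((m + 1) * (2 / t) + 2 * (2 * t * n ^ 2 / c ^ 2) / (m + 1)) := by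
        gcongr
        exact sum_range_le_of_le_of_le_div_sq (by positivity) (by positivity)
          (fun i _ _ => hsmall i) hlarge
    _ = (m + 1) / k + 2 * k / (c ^ 2 * (m + 1)) := by simp only [t]; field_simp
    _ ≤ C + 2 + 2 / (c ^ 2 * C) := by
      gcongr ?_ + ?_
      · rw [div_le_iff₀ (by positivity)]; nlinarith
      · rw [div_le_div_iff₀ (by positivity) (by positivity)]; nlinarith

theorem sval_eq_nthLargest {n : ℕ} (B : Matrix (Fin n) (Fin n) ℂ) :
    sval B = nthLargest fun i => √((Matrix.isHermitian_conjTranspose_mul_self B).eigenvalues i) :=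
  rfl

theorem sum_Icc_sval_sq {n : ℕ} (B : Matrix (Fin n) (Fin n) ℂ) (f : ℝ → ℝ) :
    ∑ r ∈ Icc 1 n, f (sval B r ^ 2) =
      ∑ i, f ((Matrix.isHermitian_conjTranspose_mul_self B).eigenvalues i) := by
  rw [sval_eq_nthLargest, sum_Icc_nthLargest _ (fun x => f (x ^ 2))]
  simp only [Real.sq_sqrt (Matrix.eigenvalues_conjTranspose_mul_self_nonneg B _)]

/-- bound on the Stieltjes transform of the Hermitization at a purely
imaginary point.  If the singular values of `B` satisfy `s_{n−i}(B) ≥ ci/n` for all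
`i ≥ Ck`, and `w = i·(k/n)`, then the imaginary part of
`m_w = (1/(2n))·tr((H − w·Id)⁻¹)`, where `H = [[0,B],[Bᴴ,0]]`, equals
`(1/(2n)) Σ_{i=1}^n 2·Im(w)/(|w|² + s_i(B)²)` and is bounded by a constant `C'`
depending only on `c` and `C`. -/
theorem stmt19 (c C : ℝ) (hc : 0 < c) (hC : 0 < C) :
    ∃ C' : ℝ, ∀ (n k : ℕ), 1 ≤ k → k < n →
    ∀ B : Matrix (Fin n) (Fin n) ℂ,
      (∀ i : ℕ, C * k ≤ (i : ℝ) → i < n → c * i / n ≤ sval B (n - i)) →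
      (((1 : ℂ) / (2 * n)) * Matrix.trace
          ((Matrix.fromBlocks 0 B B.conjTranspose 0 -
            (Complex.I * ((k : ℂ) / n)) • (1 : Matrix (Fin n ⊕ Fin n) (Fin n ⊕ Fin n) ℂ))⁻¹)).im
        = (1 / (2 * n)) * ∑ i ∈ Finset.Icc 1 n,
            2 * (Complex.I * ((k : ℂ) / n)).im /
              (‖Complex.I * ((k : ℂ) / n)‖ ^ 2 + sval B i ^ 2) ∧
      (((1 : ℂ) / (2 * n)) * Matrix.trace
          ((Matrix.fromBlocks 0 B B.conjTranspose 0 -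
            (Complex.I * ((k : ℂ) / n)) • (1 : Matrix (Fin n ⊕ Fin n) (Fin n ⊕ Fin n) ℂ))⁻¹)).im
        ≤ C' := by
  refine ⟨C + 2 + 2 / (c ^ 2 * C), fun n k hk hkn B hsv => ?_⟩
  have hn : 0 < n := by omega
  set t : ℝ := k / n
  have ht : 0 < t := by positivity
  have hw : Complex.I * ((k : ℂ) / n) = Complex.I * (t : ℂ) := by push_cast [t]; rfl
  have hwt : (Complex.I * (t : ℂ)).im = t ∧ ‖Complex.I * (t : ℂ)‖ ^ 2 = t ^ 2 := by
    simp [abs_of_pos ht]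
  have him : ((1 / (2 * n) : ℂ) *
      (Matrix.fromBlocks 0 B B.conjTranspose 0 - (Complex.I * t) • 1)⁻¹.trace).im =
      1 / (2 * n) * ∑ r ∈ Icc 1 n, 2 * t / (t ^ 2 + sval B r ^ 2) := by
    rw [show (1 / (2 * n) : ℂ) = ((1 / (2 * n) : ℝ) : ℂ) by push_cast; rfl, Complex.im_ofReal_mul,
      Matrix.trace_inv_hermitization_sub_I_mul_smul_one B ht, Complex.im_mul_ofReal,
      Complex.im_mul_ofReal, sum_Icc_sval_sq B (fun x => 2 * t / (t ^ 2 + x)), mul_sum]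
    simp [div_eq_mul_inv, add_comm]
  rw [hw, hwt.1, hwt.2, him]
  exact ⟨rfl, sum_Icc_div_sq_add_sq_le hc hC hk hn (sval B) hsv⟩
end
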